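/- arXiv:1309.6701 — 6 statements merged into one kernel-verified Lean document; each statement's English description precedes it below -/
import Mathlib

section
/- Let F be a field, let k ≥ 2 and α ≥ 1 be integers, and let x_1, ..., x_k be nonzero elements of F whose α-th powers are pairwise distinct (hence the x_i themselves are pairwise distinct). For 1 ≤ i ≤ k let ω_i = (1, x_i, ..., x_i^{k-2}) ∈ F^{k-1}. If T_1 and T_2 are symmetric (k-1)×(k-1) matrices over F satisfying ω_i T_1 + x_i^α ω_i T_2 = 0 for every i = 1, ..., k, then T_1 = 0 and T_2 = 0. -/
/-!
Pairing the relation at `ωᵢ` with `ωⱼ`, and the one at `ωⱼ` with `ωᵢ`, the symmetry of `T₁` and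
`T₂` leaves `(xᵢ^α - xⱼ^α) · ωᵢ T₂ ωⱼᵀ = 0`. So the row `ωᵢ T₂` is orthogonal to the `k - 1`
Vandermonde vectors `ωⱼ`, `j ≠ i`, and vanishes; hence `T₂ = 0`, and then every `ωᵢ T₁ = 0`
gives `T₁ = 0`.
-/

open Matrix

section Vandermonde

variable {R ι κ : Type*} [CommRing R] [IsDomain R] [Fintype ι] {n : ℕ} {x : ι → R}

theorem eq_zero_of_forall_dotProduct_pow_eq_zero (hx : Function.Injective x)
    (hn : n ≤ Fintype.card ι) {v : Fin n → R}
    (h : ∀ i, v ⬝ᵥ (fun j : Fin n => x i ^ (j : ℕ)) = 0) : v = 0 := by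
  obtain ⟨e⟩ := Function.Embedding.nonempty_of_card_le (α := Fin n) (β := ι) (by simpa using hn)
  exact eq_zero_of_forall_index_sum_mul_pow_eq_zero (hx.comp e.injective) fun j => h (e j)

theorem eq_zero_of_forall_pow_vecMul_eq_zero (hx : Function.Injective x)
    (hn : n ≤ Fintype.card ι) {T : Matrix (Fin n) κ R}
    (h : ∀ i, (fun j : Fin n => x i ^ (j : ℕ)) ᵥ* T = 0) : T = 0 :=
  Matrix.ext fun r c => congrFun (eq_zero_of_forall_dotProduct_pow_eq_zero hx hn (v := Tᵀ c)
    fun i => (dotProduct_comm _ _).trans (congrFun (h i) c)) r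

end Vandermonde

section Pencil

variable {R n : Type*} [CommRing R] [Fintype n]

theorem Matrix.IsSymm.vecMul_dotProduct_comm {T : Matrix n n R} (hT : T.IsSymm) (u w : n → R) :
    (u ᵥ* T) ⬝ᵥ w = (w ᵥ* T) ⬝ᵥ u := by
  rw [← dotProduct_vecMul_transpose, hT.eq]

theorem vecMul_dotProduct_eq_zero_of_pencil [NoZeroDivisors R] {T₁ T₂ : Matrix n n R}
    (h₁ : T₁.IsSymm) (h₂ : T₂.IsSymm) {u w : n → R} {a b : R} (hab : a ≠ b)
    (hu : u ᵥ* T₁ + a • (u ᵥ* T₂) = 0) (hw : w ᵥ* T₁ + b • (w ᵥ* T₂) = 0) :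
    (u ᵥ* T₂) ⬝ᵥ w = 0 := by
  have hu' := congrArg (· ⬝ᵥ w) hu
  have hw' := congrArg (· ⬝ᵥ u) hw
  simp only [add_dotProduct, smul_dotProduct, zero_dotProduct, smul_eq_mul] at hu' hw'
  rw [h₁.vecMul_dotProduct_comm w u, h₂.vecMul_dotProduct_comm w u] at hw'
  have hmul : (a - b) * ((u ᵥ* T₂) ⬝ᵥ w) = 0 := by linear_combination hu' - hw'
  exact (mul_eq_zero.mp hmul).resolve_left (sub_ne_zero.mpr hab)

end Pencil

theorem symm_pair_vanish_of_vandermonde_relations_general {F : Type*} [Field F]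
    (k α : ℕ)
    (x : Fin k → F)
    (hx : ∀ i j : Fin k, i ≠ j → x i ^ α ≠ x j ^ α)
    (T1 T2 : Matrix (Fin (k - 1)) (Fin (k - 1)) F)
    (hT1 : T1.IsSymm) (hT2 : T2.IsSymm)
    (hrel : ∀ i : Fin k,
      (fun j : Fin (k - 1) => x i ^ (j : ℕ)) ᵥ* T1 +
        x i ^ α • ((fun j : Fin (k - 1) => x i ^ (j : ℕ)) ᵥ* T2) = 0) :
    T1 = 0 ∧ T2 = 0 := by
  have hinj : Function.Injective x := fun i j hij => by_contra fun hne => hx i j hne (by rw [hij])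
  have hk : k - 1 ≤ Fintype.card (Fin k) := by simp
  have hrowsT2 : ∀ i, (fun j : Fin (k - 1) => x i ^ (j : ℕ)) ᵥ* T2 = 0 := fun i =>
    eq_zero_of_forall_dotProduct_pow_eq_zero (x := fun j : {j // j ≠ i} => x j)
      (hinj.comp Subtype.val_injective) (by simp [Fintype.card_subtype_compl])
      fun j => vecMul_dotProduct_eq_zero_of_pencil hT1 hT2 (hx i j j.2.symm) (hrel i) (hrel j)
  have hT2zero : T2 = 0 := eq_zero_of_forall_pow_vecMul_eq_zero hinj hk hrowsT2
  refine ⟨eq_zero_of_forall_pow_vecMul_eq_zero hinj hk fun i => ?_, hT2zero⟩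
  simpa [hT2zero] using hrel i

/-- Let `F` be a field, `k ≥ 2` and `α ≥ 1` integers, and
`x 0, …, x (k-1)` nonzero elements of `F` whose `α`-th powers are pairwise
distinct.  For each `i` let `ω i = (1, x i, …, (x i)^(k-2)) ∈ F^(k-1)`.
If `T₁` and `T₂` are symmetric `(k-1) × (k-1)` matrices over `F` with
`ω i * T₁ + (x i)^α • (ω i * T₂) = 0` for every `i`, then `T₁ = 0` and `T₂ = 0`. -/
theorem symm_pair_vanish_of_vandermonde_relations {F : Type*} [Field F]
    (k α : ℕ) (hk : 2 ≤ k) (hα : 1 ≤ α)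
    (x : Fin k → F) (hx0 : ∀ i, x i ≠ 0)
    (hx : ∀ i j : Fin k, i ≠ j → x i ^ α ≠ x j ^ α)
    (T1 T2 : Matrix (Fin (k - 1)) (Fin (k - 1)) F)
    (hT1 : T1.IsSymm) (hT2 : T2.IsSymm)
    (hrel : ∀ i : Fin k,
      (fun j : Fin (k - 1) => x i ^ (j : ℕ)) ᵥ* T1 +
        x i ^ α • ((fun j : Fin (k - 1) => x i ^ (j : ℕ)) ᵥ* T2) = 0) :
    T1 = 0 ∧ T2 = 0 :=
  symm_pair_vanish_of_vandermonde_relations_general k α x hx T1 T2 hT1 hT2 hrel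
end

section
/- (Reconstruction for Type II.) Let k ≥ 2, d = 2k-1, α = d-k+1 = k, and n ≥ k. Let x_1, ..., x_n be nonzero elements of a finite field F_q with x_i^α ≠ x_j^α for i ≠ j, and let ρ_i = (1, x_i, ..., x_i^{d-1}). If M and M' are Type II message matrices and i_1, ..., i_k are k distinct indices in {1, ..., n} such that ρ_{i_j} M = ρ_{i_j} M' for every j = 1, ..., k, then M = M'. Equivalently, a data collector connecting to any k nodes can reconstruct all B = k^2 message symbols from the k shares. -/
open Matrix

/-- The Type II message matrix of the generalized RSK-MSR code (case `d = 2k-1`,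
`α = k`): the `(2k-1) × k` block matrix `M = [T1, U1; U1ᵗ, U2; T2, O2]`, where `T1`,
`T2` are `(k-1) × (k-1)` (symmetric) matrices, `U1` is a column of length `k-1`,
`U2` is a scalar, and `O2` is the `(k-1) × 1` zero column. -/
def typeII {F : Type*} [Field F] (k : ℕ)
    (T1 T2 : Matrix (Fin (k - 1)) (Fin (k - 1)) F)
    (U1 : Fin (k - 1) → F) (U2 : F) :
    Matrix (Fin (2 * k - 1)) (Fin k) F :=
  Matrix.of fun i j =>
    if hi1 : (i : ℕ) < k - 1 then
      if hj1 : (j : ℕ) < k - 1 then T1 ⟨i, hi1⟩ ⟨j, hj1⟩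
      else U1 ⟨i, hi1⟩
    else if hi2 : (i : ℕ) = k - 1 then
      if hj1 : (j : ℕ) < k - 1 then U1 ⟨j, hj1⟩
      else U2
    else
      if hj1 : (j : ℕ) < k - 1 then T2 ⟨(i : ℕ) - k, by omega⟩ ⟨j, hj1⟩
      else 0

/-! Subtracting the two matrices, it suffices to show that a Type II matrix `M` with
`ρ_i M = 0` at `k` distinct nodes vanishes. The last entry of `ρ_i M` is the polynomial with
coefficient vector `(U1, U2)` evaluated at `x_i`, so Vandermonde gives `U1 = 0` and `U2 = 0`.
With `ψ_i = (1, x_i, …, x_i ^ (k - 2))` the other entries then read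
`ψ_i T1 + x_i ^ k • ψ_i T2 = 0`. Pairing the equation for `i` with `ψ_j` and the one for `j`
with `ψ_i`, the symmetry of `T1` and `T2` leaves `(x_i ^ k - x_j ^ k) ψ_i T2 ψ_jᵀ = 0`. So
`ψ_i T2` is orthogonal to the `k - 1` vectors `ψ_j`, `j ≠ i`, hence zero; then `ψ_i T1 = 0`
too, and Vandermonde gives `T1 = T2 = 0`. -/

open Function

-- For `m = d` this is the coding vector `ρ` of the node with evaluation point `z`.
def powVec {R : Type*} [Monoid R] (m : ℕ) (z : R) : Fin m → R := fun t => z ^ (t : ℕ)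

lemma Fin.sum_univ_two_mul_add_one_sub_one {M : Type*} [AddCommMonoid M] (a : ℕ)
    (f : Fin (2 * (a + 1) - 1) → M) :
    ∑ t, f t = ∑ s : Fin a, f ⟨s, by omega⟩ + f ⟨a, by omega⟩ +
      ∑ s : Fin a, f ⟨a + 1 + s, by omega⟩ := by
  rw [← (finCongr (by omega : 2 * (a + 1) - 1 = a + 1 + a)).symm.sum_comp, Fin.sum_univ_add,
    Fin.sum_univ_castSucc]
  rfl

lemma Fin.snoc_eq_zero_iff {α : Type*} [Zero α] {n : ℕ} {f : Fin n → α} {x : α} :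
    (Fin.snoc f x : Fin (n + 1) → α) = 0 ↔ f = 0 ∧ x = 0 := by
  have h0 : (Fin.snoc 0 0 : Fin (n + 1) → α) = 0 := by
    ext i
    refine Fin.lastCases ?_ (fun i => ?_) i <;> simp
  rw [← h0, Fin.snoc_inj]

lemma vecMul_dotProduct_eq_zero_of_vecMul_add_smul_vecMul_eq_zero {R : Type*} [CommRing R]
    [NoZeroDivisors R] {n : Type*} [Fintype n] {A B : Matrix n n R} (hA : A.IsSymm)
    (hB : B.IsSymm) {u v : n → R} {c d : R} (hu : u ᵥ* A + c • u ᵥ* B = 0)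
    (hv : v ᵥ* A + d • v ᵥ* B = 0) (hcd : c ≠ d) : u ᵥ* B ⬝ᵥ v = 0 := by
  have hsymm {C : Matrix n n R} (hC : C.IsSymm) : v ᵥ* C ⬝ᵥ u = u ᵥ* C ⬝ᵥ v := by
    rw [dotProduct_comm, ← dotProduct_mulVec, ← vecMul_transpose, hC.eq]
  have hu' : u ᵥ* A ⬝ᵥ v + c * (u ᵥ* B ⬝ᵥ v) = 0 := by
    simpa [add_dotProduct, smul_dotProduct] using congrArg (· ⬝ᵥ v) hu
  have hv' : u ᵥ* A ⬝ᵥ v + d * (u ᵥ* B ⬝ᵥ v) = 0 := by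
    simpa [add_dotProduct, smul_dotProduct, hsymm hA, hsymm hB] using congrArg (· ⬝ᵥ u) hv
  have h : (c - d) * (u ᵥ* B ⬝ᵥ v) = 0 := by linear_combination hu' - hv'
  exact (mul_eq_zero.mp h).resolve_left (sub_ne_zero.mpr hcd)

section Vandermonde

variable {R : Type*} [CommRing R] [IsDomain R] {ι : Type*} [Fintype ι] {m : ℕ} {y : ι → R}

lemma eq_zero_of_forall_powVec_dotProduct_eq_zero (hy : Injective y) (hm : m ≤ Fintype.card ι)
    {v : Fin m → R} (h : ∀ i, powVec m (y i) ⬝ᵥ v = 0) : v = 0 :=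
  let e : Fin m ↪ ι := (Fin.castLEEmb hm).trans (Fintype.equivFin ι).symm.toEmbedding
  eq_zero_of_forall_index_sum_pow_mul_eq_zero (hy.comp e.injective) fun j => h (e j)

lemma eq_zero_of_forall_powVec_vecMul_eq_zero {n : Type*} (hy : Injective y)
    (hm : m ≤ Fintype.card ι) {A : Matrix (Fin m) n R} (h : ∀ i, powVec m (y i) ᵥ* A = 0) :
    A = 0 := by
  ext s j
  exact congrFun (eq_zero_of_forall_powVec_dotProduct_eq_zero hy hm fun i => congrFun (h i) j) s

lemma eq_zero_of_forall_powVec_vecMul_add_smul_eq_zero {a : ℕ} {c : ι → R} (hy : Injective y)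
    (hc : Injective c) (ha : a < Fintype.card ι) {A B : Matrix (Fin a) (Fin a) R}
    (hA : A.IsSymm) (hB : B.IsSymm)
    (h : ∀ i, powVec a (y i) ᵥ* A + c i • powVec a (y i) ᵥ* B = 0) : A = 0 ∧ B = 0 := by
  classical
  have hB0 (i : ι) : powVec a (y i) ᵥ* B = 0 := by
    refine eq_zero_of_forall_powVec_dotProduct_eq_zero
      (hy.comp (Subtype.val_injective (p := (· ≠ i)))) ?_ fun j => ?_
    · rw [Fintype.card_subtype_compl, Fintype.card_subtype_eq]
      omega
    · rw [dotProduct_comm]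
      exact vecMul_dotProduct_eq_zero_of_vecMul_add_smul_vecMul_eq_zero hA hB (h i) (h j)
        (hc.ne j.2.symm)
  have hA0 (i : ι) : powVec a (y i) ᵥ* A = 0 := by simpa [hB0 i] using h i
  exact ⟨eq_zero_of_forall_powVec_vecMul_eq_zero hy ha.le hA0,
    eq_zero_of_forall_powVec_vecMul_eq_zero hy ha.le hB0⟩

end Vandermonde

section TypeII

variable {F : Type*} [Field F]

lemma typeII_sub (k : ℕ) (T1 T2 T1' T2' : Matrix (Fin (k - 1)) (Fin (k - 1)) F)
    (U1 U1' : Fin (k - 1) → F) (U2 U2' : F) :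
    typeII k T1 T2 U1 U2 - typeII k T1' T2' U1' U2' =
      typeII k (T1 - T1') (T2 - T2') (U1 - U1') (U2 - U2') := by
  ext i j
  simp only [typeII, Matrix.sub_apply, of_apply]
  split_ifs <;> simp

lemma typeII_zero (k : ℕ) : typeII k (0 : Matrix (Fin (k - 1)) (Fin (k - 1)) F) 0 0 0 = 0 := by
  ext i j
  simp only [typeII, of_apply]
  split_ifs <;> rfl

lemma powVec_vecMul_typeII (a : ℕ) (T1 T2 : Matrix (Fin a) (Fin a) F) (U1 : Fin a → F) (U2 z : F) :
    powVec (2 * (a + 1) - 1) z ᵥ* typeII (a + 1) T1 T2 U1 U2 =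
      Fin.snoc (powVec a z ᵥ* T1 + z ^ a • U1 + z ^ (a + 1) • powVec a z ᵥ* T2)
        (powVec (a + 1) z ⬝ᵥ Fin.snoc U1 U2) := by
  ext j
  rw [vecMul, dotProduct, Fin.sum_univ_two_mul_add_one_sub_one]
  refine Fin.lastCases ?_ (fun j => ?_) j <;>
    simp [typeII, powVec, vecMul, dotProduct, Fin.sum_univ_castSucc, pow_add, Finset.mul_sum,
      mul_assoc, add_assoc, Nat.add_sub_add_left]

theorem typeII_eq_zero_of_forall_powVec_vecMul_eq_zero {a : ℕ} {y : Fin (a + 1) → F}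
    (hy : Injective fun i => y i ^ (a + 1)) {T1 T2 : Matrix (Fin a) (Fin a) F}
    (hT1 : T1.IsSymm) (hT2 : T2.IsSymm) {U1 : Fin a → F} {U2 : F}
    (h : ∀ i, powVec (2 * (a + 1) - 1) (y i) ᵥ* typeII (a + 1) T1 T2 U1 U2 = 0) :
    typeII (a + 1) T1 T2 U1 U2 = 0 := by
  have hy' : Injective y := hy.of_comp
  simp only [powVec_vecMul_typeII, Fin.snoc_eq_zero_iff] at h
  obtain ⟨rfl, rfl⟩ : U1 = 0 ∧ U2 = 0 := Fin.snoc_eq_zero_iff.mp <|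
    eq_zero_of_forall_powVec_dotProduct_eq_zero hy' (by simp) fun i => (h i).2
  obtain ⟨rfl, rfl⟩ := eq_zero_of_forall_powVec_vecMul_add_smul_eq_zero hy' hy (by simp) hT1 hT2
    fun i => by simpa using (h i).1
  exact typeII_zero (a + 1)

end TypeII

theorem typeII_reconstruction_general {F : Type*} [Field F]
    (k n : ℕ)
    (x : Fin n → F)
    (hx : ∀ i j : Fin n, i ≠ j → x i ^ k ≠ x j ^ k)
    (T1 T2 T1' T2' : Matrix (Fin (k - 1)) (Fin (k - 1)) F)
    (hT1 : T1.IsSymm) (hT2 : T2.IsSymm) (hT1' : T1'.IsSymm) (hT2' : T2'.IsSymm)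
    (U1 U1' : Fin (k - 1) → F) (U2 U2' : F)
    (idx : Fin k → Fin n) (hidx : Function.Injective idx)
    (hshare : ∀ j : Fin k,
      (fun t : Fin (2 * k - 1) => x (idx j) ^ (t : ℕ)) ᵥ* typeII k T1 T2 U1 U2 =
      (fun t : Fin (2 * k - 1) => x (idx j) ^ (t : ℕ)) ᵥ* typeII k T1' T2' U1' U2') :
    typeII k T1 T2 U1 U2 = typeII k T1' T2' U1' U2' := by
  obtain _ | a := k
  · ext i j
    exact j.elim0
  rw [← sub_eq_zero, typeII_sub]
  refine typeII_eq_zero_of_forall_powVec_vecMul_eq_zero (y := x ∘ idx)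
    (fun i j hij => by_contra fun hne => hx _ _ (hidx.ne hne) hij) (hT1.sub hT1') (hT2.sub hT2')
    fun i => ?_
  rw [← typeII_sub, vecMul_sub, sub_eq_zero]
  exact hshare i

/-- **Reconstruction for Type II.**  Let `k ≥ 2`, `d = 2k-1`,
`α = d - k + 1 = k`, `n ≥ k`, and let `x 0, …, x (n-1)` be nonzero elements of a
finite field `F` whose `α`-th powers are pairwise distinct, with coding vectors
`ρ i = (1, x i, …, (x i)^(d-1))`.  If `M` and `M'` are Type II message matrices and
`idx 0, …, idx (k-1)` are `k` distinct indices with `ρ (idx j) * M = ρ (idx j) * M'`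
for every `j`, then `M = M'`:  any `k` shares determine all `B = k²` message
symbols. -/
theorem typeII_reconstruction {F : Type*} [Field F] [Fintype F]
    (k n : ℕ) (hk : 2 ≤ k) (hn : k ≤ n)
    (x : Fin n → F) (hx0 : ∀ i, x i ≠ 0)
    (hx : ∀ i j : Fin n, i ≠ j → x i ^ k ≠ x j ^ k)
    (T1 T2 T1' T2' : Matrix (Fin (k - 1)) (Fin (k - 1)) F)
    (hT1 : T1.IsSymm) (hT2 : T2.IsSymm) (hT1' : T1'.IsSymm) (hT2' : T2'.IsSymm)
    (U1 U1' : Fin (k - 1) → F) (U2 U2' : F)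
    (idx : Fin k → Fin n) (hidx : Function.Injective idx)
    (hshare : ∀ j : Fin k,
      (fun t : Fin (2 * k - 1) => x (idx j) ^ (t : ℕ)) ᵥ* typeII k T1 T2 U1 U2 =
      (fun t : Fin (2 * k - 1) => x (idx j) ^ (t : ℕ)) ᵥ* typeII k T1' T2' U1' U2') :
    typeII k T1 T2 U1 U2 = typeII k T1' T2' U1' U2' :=
  typeII_reconstruction_general k n x hx T1 T2 T1' T2' hT1 hT2 hT1' hT2' U1 U1' U2 U2' idx hidx
    hshare
end

section
/- (Reconstruction for Type I.) Let k ≥ 2, d = 2k-2, α = d-k+1 = k-1, and n ≥ k. Let x_1, ..., x_n be nonzero elements of a finite field F_q with x_i^α ≠ x_j^α for i ≠ j, and let ρ_i = (1, x_i, ..., x_i^{d-1}). If T_1, T_2 and T_1', T_2' are symmetric (k-1)×(k-1) matrices over F_q, M = [T_1; T_2] and M' = [T_1'; T_2'] are the corresponding stacked d×α matrices, and i_1, ..., i_k are k distinct indices with ρ_{i_j} M = ρ_{i_j} M' for every j = 1, ..., k, then T_1 = T_1' and T_2 = T_2'. Equivalently, any k shares determine all B = k(k-1) message symbols. -/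
open Matrix

/-!
Write `ψ(a) = (1, a, …, a^{m-1})` with `m = k - 1`, so that node `i`'s coding vector is
`(ψ(xᵢ), xᵢ^m ψ(xᵢ))`. The differences `S₁ = T₁ - T₁'`, `S₂ = T₂ - T₂'` are symmetric and satisfy
`ψ(zⱼ) S₁ + zⱼ^m ψ(zⱼ) S₂ = 0` at the `m + 1` selected points `zⱼ`. Pairing the equation at `zᵢ`
with `ψ(zⱼ)` and the one at `zⱼ` with `ψ(zᵢ)`, symmetry gives `(zᵢ^m - zⱼ^m) ψ(zᵢ) S₂ ψ(zⱼ)ᵀ = 0`,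
so the row `ψ(zᵢ) S₂` is orthogonal to the `m` vectors `ψ(zⱼ)`, `j ≠ i`; by Vandermonde it vanishes.
Then `ψ(zᵢ) S₂ = 0` for `m` distinct points forces `S₂ = 0`, and likewise `S₁ = 0`.
-/

section

variable {R : Type*} [CommRing R]

theorem Matrix.IsSymm.vecMul_dotProduct_comm_s4 {n : Type*} [Fintype n] {S : Matrix n n R}
    (hS : S.IsSymm) (u v : n → R) : (u ᵥ* S) ⬝ᵥ v = (v ᵥ* S) ⬝ᵥ u := by
  rw [← dotProduct_mulVec, ← vecMul_transpose, hS.eq, dotProduct_comm]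

theorem vecMul_dotProduct_eq_zero_of_ne [NoZeroDivisors R] {n ι : Type*} [Fintype n]
    {S₁ S₂ : Matrix n n R} (hS₁ : S₁.IsSymm) (hS₂ : S₂.IsSymm) {u : ι → n → R} {c : ι → R}
    (h : ∀ i, u i ᵥ* S₁ + c i • (u i ᵥ* S₂) = 0) {i j : ι} (hij : c i ≠ c j) :
    (u i ᵥ* S₂) ⬝ᵥ u j = 0 := by
  have hi := congrArg (· ⬝ᵥ u j) (h i)
  have hj := congrArg (· ⬝ᵥ u i) (h j)
  simp only [add_dotProduct, smul_dotProduct, smul_eq_mul, zero_dotProduct] at hi hj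
  rw [hS₁.vecMul_dotProduct_comm_s4 (u j), hS₂.vecMul_dotProduct_comm_s4 (u j)] at hj
  have : (c i - c j) * ((u i ᵥ* S₂) ⬝ᵥ u j) = 0 := by linear_combination hi - hj
  exact (mul_eq_zero.mp this).resolve_left (sub_ne_zero.mpr hij)

/-- The rows of `vandermonde v` are, definitionally, `powerVec m (v i)`. -/
def powerVec (m : ℕ) (a : R) : Fin m → R := fun t => a ^ (t : ℕ)

theorem sumElim_powerVec_vecMul_fromRows {m : ℕ} {o : Type*} (a : R) (T₁ T₂ : Matrix (Fin m) o R) :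
    Sum.elim (fun t : Fin m => a ^ (t : ℕ)) (fun t : Fin m => a ^ (m + (t : ℕ))) ᵥ*
        fromRows T₁ T₂ = powerVec m a ᵥ* T₁ + a ^ m • (powerVec m a ᵥ* T₂) := by
  have : (fun t : Fin m => a ^ (m + (t : ℕ))) = a ^ m • powerVec m a := by
    funext t; simp [powerVec, pow_add]
  rw [sumElim_vecMul_fromRows, this, smul_vecMul]
  rfl

variable [IsDomain R]

theorem eq_zero_of_forall_powerVec_vecMul_eq_zero {m : ℕ} {o : Type*} {v : Fin m → R}
    (hv : Function.Injective v) {S : Matrix (Fin m) o R} (h : ∀ i, powerVec m (v i) ᵥ* S = 0) :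
    S = 0 := by
  ext s c
  have hcol : (fun s => S s c) = 0 :=
    eq_zero_of_forall_index_sum_pow_mul_eq_zero hv fun i => congrFun (h i) c
  exact congrFun hcol s

theorem eq_zero_of_powerVec_vecMul_add_pow_smul_eq_zero {m : ℕ} {z : Fin (m + 1) → R}
    (hz : ∀ i j, i ≠ j → z i ^ m ≠ z j ^ m) {S₁ S₂ : Matrix (Fin m) (Fin m) R}
    (hS₁ : S₁.IsSymm) (hS₂ : S₂.IsSymm)
    (h : ∀ j, powerVec m (z j) ᵥ* S₁ + z j ^ m • (powerVec m (z j) ᵥ* S₂) = 0) :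
    S₁ = 0 ∧ S₂ = 0 := by
  have hz_inj : Function.Injective z := fun i j hij => by
    by_contra hne
    exact hz i j hne (by rw [hij])
  have hrow : ∀ i, powerVec m (z i) ᵥ* S₂ = 0 := fun i =>
    eq_zero_of_forall_index_sum_mul_pow_eq_zero (hz_inj.comp Fin.succAbove_right_injective)
      fun t => vecMul_dotProduct_eq_zero_of_ne hS₁ hS₂ h (hz _ _ (Fin.succAbove_ne i t).symm)
  have hS₂_zero : S₂ = 0 :=
    eq_zero_of_forall_powerVec_vecMul_eq_zero (hz_inj.comp (Fin.castSucc_injective m))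
      fun i => hrow i.castSucc
  refine ⟨eq_zero_of_forall_powerVec_vecMul_eq_zero (hz_inj.comp (Fin.castSucc_injective m))
    fun i => ?_, hS₂_zero⟩
  simpa [hS₂_zero] using h i.castSucc

end

theorem typeI_reconstruction_general {F : Type*} [Field F]
    (k n : ℕ)
    (x : Fin n → F)
    (hx : ∀ i j : Fin n, i ≠ j → x i ^ (k - 1) ≠ x j ^ (k - 1))
    (T1 T2 T1' T2' : Matrix (Fin (k - 1)) (Fin (k - 1)) F)
    (hT1 : T1.IsSymm) (hT2 : T2.IsSymm) (hT1' : T1'.IsSymm) (hT2' : T2'.IsSymm)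
    (idx : Fin k → Fin n) (hidx : Function.Injective idx)
    (hshare : ∀ j : Fin k,
      (Sum.elim (fun t : Fin (k - 1) => x (idx j) ^ (t : ℕ))
          (fun t : Fin (k - 1) => x (idx j) ^ (k - 1 + (t : ℕ)))) ᵥ*
        Matrix.fromRows T1 T2 =
      (Sum.elim (fun t : Fin (k - 1) => x (idx j) ^ (t : ℕ))
          (fun t : Fin (k - 1) => x (idx j) ^ (k - 1 + (t : ℕ)))) ᵥ*
        Matrix.fromRows T1' T2') :
    T1 = T1' ∧ T2 = T2' := by
  cases k with
  | zero => exact ⟨ext fun i => i.elim0, ext fun i => i.elim0⟩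
  | succ m =>
    have hdiff : ∀ j, powerVec m (x (idx j)) ᵥ* (T1 - T1') +
        x (idx j) ^ m • (powerVec m (x (idx j)) ᵥ* (T2 - T2')) = 0 := fun j => by
      have hj := hshare j
      rw [sumElim_powerVec_vecMul_fromRows, sumElim_powerVec_vecMul_fromRows] at hj
      rw [vecMul_sub, vecMul_sub, smul_sub, ← add_sub_add_comm]
      exact sub_eq_zero.mpr hj
    obtain ⟨h1, h2⟩ := eq_zero_of_powerVec_vecMul_add_pow_smul_eq_zero
      (fun i j hij => hx _ _ (hidx.ne hij)) (hT1.sub hT1') (hT2.sub hT2') hdiff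
    exact ⟨sub_eq_zero.mp h1, sub_eq_zero.mp h2⟩

/-- **Reconstruction for Type I.**  Let `k ≥ 2`, `d = 2k-2`,
`α = d - k + 1 = k - 1`, `n ≥ k`, and let `x 0, …, x (n-1)` be nonzero elements of a
finite field `F` whose `α`-th powers are pairwise distinct; the coding vector of
node `i` is `ρ i = (1, x i, …, (x i)^(d-1))` (here indexed by
`Fin (k-1) ⊕ Fin (k-1)`, with the second summand carrying the exponents
`k-1, …, 2k-3`).  If `T1, T2` and `T1', T2'` are symmetric `(k-1) × (k-1)` matrices,
`M = [T1; T2]` and `M' = [T1'; T2']` the stacked `d × α` matrices, and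
`idx 0, …, idx (k-1)` are `k` distinct indices with `ρ (idx j) * M = ρ (idx j) * M'`
for every `j`, then `T1 = T1'` and `T2 = T2'`:  any `k` shares determine all
`B = k(k-1)` message symbols. -/
theorem typeI_reconstruction {F : Type*} [Field F] [Fintype F]
    (k n : ℕ) (hk : 2 ≤ k) (hn : k ≤ n)
    (x : Fin n → F) (hx0 : ∀ i, x i ≠ 0)
    (hx : ∀ i j : Fin n, i ≠ j → x i ^ (k - 1) ≠ x j ^ (k - 1))
    (T1 T2 T1' T2' : Matrix (Fin (k - 1)) (Fin (k - 1)) F)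
    (hT1 : T1.IsSymm) (hT2 : T2.IsSymm) (hT1' : T1'.IsSymm) (hT2' : T2'.IsSymm)
    (idx : Fin k → Fin n) (hidx : Function.Injective idx)
    (hshare : ∀ j : Fin k,
      (Sum.elim (fun t : Fin (k - 1) => x (idx j) ^ (t : ℕ))
          (fun t : Fin (k - 1) => x (idx j) ^ (k - 1 + (t : ℕ)))) ᵥ*
        Matrix.fromRows T1 T2 =
      (Sum.elim (fun t : Fin (k - 1) => x (idx j) ^ (t : ℕ))
          (fun t : Fin (k - 1) => x (idx j) ^ (k - 1 + (t : ℕ)))) ᵥ*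
        Matrix.fromRows T1' T2') :
    T1 = T1' ∧ T2 = T2' :=
  typeI_reconstruction_general k n x hx T1 T2 T1' T2' hT1 hT2 hT1' hT2' idx hidx hshare
end

section
/- (Steps 1 and 2 of Type III reconstruction.) Let k ≥ 2, d ≥ 2k, α = d-k+1, and let x_{i_1}, ..., x_{i_k} be nonzero elements of F_q whose α-th powers are pairwise distinct, with coding vectors ρ_{i_j} = (1, x_{i_j}, ..., x_{i_j}^{d-1}). Let M and M' be Type III message matrices with blocks (T1,U1,U2,V1,V2,T2) and (T1',U1',U2',V1',V2') respectively. If for every j = 1, ..., k the last α-k+1 coordinates (coordinates k, k+1, ..., α) of the shares agree, i.e., the k-th through α-th entries of ρ_{i_j} M equal those of ρ_{i_j} M', then U1 = U1', U2 = U2', V1 = V1', and V2 = V2'. -/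
open Matrix

/-- The Type III message matrix of the generalized RSK-MSR code: the `d × (d-k+1)`
block matrix `M = [T1, U1, V1; U1ᵗ, U2, V2; V1ᵗ, V2ᵗ, O1; T2, O2]`. -/
def typeIII {F : Type*} [Field F] (k d : ℕ)
    (T1 T2 : Matrix (Fin (k - 1)) (Fin (k - 1)) F)
    (U1 : Fin (k - 1) → F) (U2 : F)
    (V1 : Matrix (Fin (k - 1)) (Fin (d - 2 * k + 1)) F)
    (V2 : Fin (d - 2 * k + 1) → F) :
    Matrix (Fin d) (Fin (d - k + 1)) F :=
  Matrix.of fun i j =>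
    if hi1 : (i : ℕ) < k - 1 then
      if hj1 : (j : ℕ) < k - 1 then T1 ⟨i, hi1⟩ ⟨j, hj1⟩
      else if hj2 : (j : ℕ) = k - 1 then U1 ⟨i, hi1⟩
      else V1 ⟨i, hi1⟩ ⟨(j : ℕ) - k, by omega⟩
    else if hi2 : (i : ℕ) = k - 1 then
      if hj1 : (j : ℕ) < k - 1 then U1 ⟨j, hj1⟩
      else if hj2 : (j : ℕ) = k - 1 then U2
      else V2 ⟨(j : ℕ) - k, by omega⟩
    else if hi3 : (i : ℕ) < d - k + 1 then
      if hj1 : (j : ℕ) < k - 1 then V1 ⟨j, hj1⟩ ⟨(i : ℕ) - k, by omega⟩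
      else if hj2 : (j : ℕ) = k - 1 then V2 ⟨(i : ℕ) - k, by omega⟩
      else 0
    else
      if hj1 : (j : ℕ) < k - 1 then T2 ⟨(i : ℕ) - (d - k + 1), by omega⟩ ⟨j, hj1⟩
      else 0

lemma sum_fin_trunc {F : Type*} [AddCommMonoid F] {d k : ℕ} (hkd : k ≤ d) (f : Fin d → F)
    (hf : ∀ s : Fin d, k ≤ (s : ℕ) → f s = 0) :
    ∑ s : Fin d, f s = ∑ i : Fin k, f ⟨i, lt_of_lt_of_le i.isLt hkd⟩ := by
  set g : ℕ → F := fun n => if h : n < d then f ⟨n, h⟩ else 0 with hg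
  have h1 : ∑ s : Fin d, f s = ∑ n ∈ Finset.range d, g n := by
    rw [← Fin.sum_univ_eq_sum_range]
    exact Finset.sum_congr rfl fun s _ => by simp [hg, s.isLt]
  have h2 : ∑ n ∈ Finset.range d, g n = ∑ n ∈ Finset.range k, g n := by
    refine (Finset.sum_subset (Finset.range_subset_range.2 hkd) ?_).symm
    intro n hn hnk
    simp only [Finset.mem_range] at hn hnk
    simp only [hg, dif_pos hn]
    exact hf ⟨n, hn⟩ (le_of_not_gt hnk)
  have h3 : ∑ n ∈ Finset.range k, g n = ∑ i : Fin k, g i := (Fin.sum_univ_eq_sum_range g k).symm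
  rw [h1, h2, h3]
  exact Finset.sum_congr rfl fun i _ => by simp [hg, lt_of_lt_of_le i.isLt hkd]


set_option maxHeartbeats 1000000 in
/-- **Steps 1 and 2 of the Type III reconstruction.**  Let `k ≥ 2`,
`d ≥ 2k`, `α = d - k + 1`, and let `x 0, …, x (k-1)` be nonzero elements of a finite
field `F` whose `α`-th powers are pairwise distinct, with coding vectors
`ρ j = (1, x j, …, (x j)^(d-1))`.  Let `M`, `M'` be Type III message matrices with
blocks `(T1, U1, U2, V1, V2, T2)` and `(T1', U1', U2', V1', V2', T2')`.  If for every
`j` the coordinates `t` with `(t : ℕ) ≥ k - 1` (the `k`-th through `α`-th share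
coordinates, in 1-indexed terms) of `ρ j * M` and `ρ j * M'` agree, then `U1 = U1'`,
`U2 = U2'`, `V1 = V1'` and `V2 = V2'`. -/
theorem typeIII_reconstruction_steps12 {F : Type*} [Field F] [Fintype F]
    (k d : ℕ) (hk : 2 ≤ k) (hd : 2 * k ≤ d)
    (x : Fin k → F) (hx0 : ∀ j, x j ≠ 0)
    (hx : ∀ i j : Fin k, i ≠ j → x i ^ (d - k + 1) ≠ x j ^ (d - k + 1))
    (T1 T2 T1' T2' : Matrix (Fin (k - 1)) (Fin (k - 1)) F)
    (hT1 : T1.IsSymm) (hT2 : T2.IsSymm) (hT1' : T1'.IsSymm) (hT2' : T2'.IsSymm)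
    (U1 U1' : Fin (k - 1) → F) (U2 U2' : F)
    (V1 V1' : Matrix (Fin (k - 1)) (Fin (d - 2 * k + 1)) F)
    (V2 V2' : Fin (d - 2 * k + 1) → F)
    (hshare : ∀ (j : Fin k) (t : Fin (d - k + 1)), k - 1 ≤ (t : ℕ) →
      ((fun s : Fin d => x j ^ (s : ℕ)) ᵥ* typeIII k d T1 T2 U1 U2 V1 V2) t =
      ((fun s : Fin d => x j ^ (s : ℕ)) ᵥ* typeIII k d T1' T2' U1' U2' V1' V2') t) :
    U1 = U1' ∧ U2 = U2' ∧ V1 = V1' ∧ V2 = V2' := by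
  have hkd : k ≤ d := by omega
  have hxinj : Function.Injective x := by
    intro i j h
    by_contra hne
    exact hx i j hne (by rw [h])
  -- Step 1: recover V1, V2
  have hV : ∀ m : Fin (d - 2 * k + 1),
      (∀ i : Fin (k - 1), V1 i m = V1' i m) ∧ V2 m = V2' m := by
    intro m
    have htlt : k + (m : ℕ) < d - k + 1 := by omega
    set t : Fin (d - k + 1) := ⟨k + (m : ℕ), htlt⟩ with ht
    set c : Fin k → F := fun i =>
      if h : (i : ℕ) < k - 1 then V1 ⟨i, h⟩ m - V1' ⟨i, h⟩ m else V2 m - V2' m with hc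
    have hczero : c = 0 := by
      apply Matrix.eq_zero_of_forall_index_sum_pow_mul_eq_zero hxinj
      intro j
      have h1 := hshare j t (by rw [ht] <;> (first | omega | (simp only [Fin.val_mk]; omega)))
      simp only [Matrix.vecMul, dotProduct] at h1
      have h2 : ∑ s : Fin d, x j ^ (s : ℕ) *
          (typeIII k d T1 T2 U1 U2 V1 V2 s t - typeIII k d T1' T2' U1' U2' V1' V2' s t) = 0 := by
        simp only [mul_sub, Finset.sum_sub_distrib, h1, sub_self]
      rw [sum_fin_trunc hkd _ ?hvan] at h2
      case hvan =>
        intro s hs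
        have hMz : ∀ (A B : Matrix (Fin (k-1)) (Fin (k-1)) F) (u : Fin (k-1) → F) (u2 : F)
            (v : Matrix (Fin (k-1)) (Fin (d-2*k+1)) F) (v2 : Fin (d-2*k+1) → F),
            typeIII k d A B u u2 v v2 s t = typeIII k d A B u u2 v v2 s t := fun _ _ _ _ _ _ => rfl
        have e1 : typeIII k d T1 T2 U1 U2 V1 V2 s t = typeIII k d T1' T2' U1' U2' V1' V2' s t := by
          simp only [typeIII, Matrix.of_apply, ht]
          split_ifs with h1 h2 h3 h4 h5 h6 h7 h8 h9 <;>
            first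
            | rfl
            | omega
            | (simp only [Fin.val_mk] at *; omega)
        rw [e1, sub_self, mul_zero]
      rw [← h2]
      refine Finset.sum_congr rfl fun i _ => ?_
      have hival : ((⟨(i : ℕ), lt_of_lt_of_le i.isLt hkd⟩ : Fin d) : ℕ) = (i : ℕ) := rfl
      have hsub : k + (m : ℕ) - k = (m : ℕ) := by omega
      simp only [hc, typeIII, Matrix.of_apply, ht, hival, Fin.val_mk, hsub, Fin.eta]
      split_ifs <;>
        first
        | omega
        | rfl
        | (simp only [Fin.val_mk] at *; omega)
    constructor
    · intro i
      have := congrFun hczero ⟨(i : ℕ), by omega⟩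
      simp only [hc, Pi.zero_apply] at this
      rw [dif_pos i.isLt] at this
      have heq : V1 ⟨(i : ℕ), i.isLt⟩ m = V1' ⟨(i : ℕ), i.isLt⟩ m := sub_eq_zero.mp this
      simpa using heq
    · have := congrFun hczero ⟨k - 1, by omega⟩
      simp only [hc, Pi.zero_apply] at this
      rw [dif_neg (by first | omega | (simp only [Fin.val_mk]; omega))] at this
      exact sub_eq_zero.mp this
  have hV1 : V1 = V1' := by
    ext i m; exact (hV m).1 i
  have hV2 : V2 = V2' := funext fun m => (hV m).2
  subst hV1; subst hV2
  -- Step 2: recover U1, U2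
  have htlt : k - 1 < d - k + 1 := by omega
  set t : Fin (d - k + 1) := ⟨k - 1, htlt⟩ with ht
  set c : Fin k → F := fun i =>
    if h : (i : ℕ) < k - 1 then U1 ⟨i, h⟩ - U1' ⟨i, h⟩ else U2 - U2' with hc
  have hczero : c = 0 := by
    apply Matrix.eq_zero_of_forall_index_sum_pow_mul_eq_zero hxinj
    intro j
    have h1 := hshare j t (by rw [ht] <;> (first | omega | (simp only [Fin.val_mk]; omega)))
    simp only [Matrix.vecMul, dotProduct] at h1
    have h2 : ∑ s : Fin d, x j ^ (s : ℕ) *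
        (typeIII k d T1 T2 U1 U2 V1 V2 s t - typeIII k d T1' T2' U1' U2' V1 V2 s t) = 0 := by
      simp only [mul_sub, Finset.sum_sub_distrib, h1, sub_self]
    rw [sum_fin_trunc hkd _ ?hvan] at h2
    case hvan =>
      intro s hs
      have e1 : typeIII k d T1 T2 U1 U2 V1 V2 s t = typeIII k d T1' T2' U1' U2' V1 V2 s t := by
        simp only [typeIII, Matrix.of_apply, ht]
        split_ifs with h1 h2 h3 h4 h5 h6 h7 h8 h9 <;>
          first
          | rfl
          | omega
          | (simp only [Fin.val_mk] at *; omega)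
      rw [e1, sub_self, mul_zero]
    rw [← h2]
    refine Finset.sum_congr rfl fun i _ => ?_
    have hival : ((⟨(i : ℕ), lt_of_lt_of_le i.isLt hkd⟩ : Fin d) : ℕ) = (i : ℕ) := rfl
    simp only [hc, typeIII, Matrix.of_apply, ht, hival, Fin.val_mk]
    split_ifs <;>
      first
      | omega
      | rfl
      | (simp only [Fin.val_mk] at *; omega)
  refine ⟨?_, ?_, rfl, rfl⟩
  · funext i
    have := congrFun hczero ⟨(i : ℕ), by omega⟩
    simp only [hc, Pi.zero_apply] at this
    rw [dif_pos i.isLt] at this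
    have h2 : U1 ⟨(i : ℕ), i.isLt⟩ = U1' ⟨(i : ℕ), i.isLt⟩ := sub_eq_zero.mp this
    simpa using h2
  · have := congrFun hczero ⟨k - 1, by omega⟩
    simp only [hc, Pi.zero_apply] at this
    rw [dif_neg (by first | omega | (simp only [Fin.val_mk]; omega))] at this
    exact sub_eq_zero.mp this
end

section
/- (Regeneration for Types I, II and III.) Let k ≥ 2 and d ≥ 2k-2 with α = d-k+1, and let n ≥ d+1. Let x_1, ..., x_n be nonzero elements of a finite field F_q with x_i^α ≠ x_j^α for i ≠ j, and for each i let ρ_i = (1, x_i, ..., x_i^{d-1}) and φ_i = (1, x_i, ..., x_i^{α-1}). Let M and M' be d×α matrices of the form [W1; [T2, O]] and [W1'; [T2', O]] respectively, where W1, W1' are symmetric α×α matrices, T2, T2' are symmetric (k-1)×(k-1) matrices, and O is the (k-1)×(α-k+1) zero matrix. Let f ∈ {1, ..., n} and let h_1, ..., h_d be d distinct indices in {1, ..., n}\{f}. If the repair downloads coincide, i.e., ρ_{h_p} M φ_f^t = ρ_{h_p} M' φ_f^t for every p = 1, ..., d, then the shares of node f coincide: ρ_f M = ρ_f M'. Equivalently,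 a failed node connecting to any d helper nodes can regenerate exactly the share it stored prior to failure from the d downloaded symbols d_{f,h_p} = c_{h_p} φ_f^t. -/
/-!
The symbol sent by helper `h` is `ρ_h · (M φ_fᵗ)`, the value at `x_h` of the polynomial of degree
`< d` whose coefficients are the entries of `M φ_fᵗ`. The `x_h` of the `d` helpers are distinct, so
Vandermonde invertibility recovers `M φ_fᵗ = (W1 φ_fᵗ; T2 φ'_fᵗ)`, where `φ'_f` is the first `k - 1`
entries of `φ_f` (this needs `k - 1 ≤ α`). By symmetry of `W1` and `T2`,
`ρ_f M = φ_f W1 + x_f^α [φ'_f T2, O] = (W1 φ_fᵗ)ᵗ + x_f^α [(T2 φ'_fᵗ)ᵗ, O]`.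
-/

open Matrix Function

namespace RegeneratingCode

variable {R : Type*} [CommRing R] {a b : ℕ}

def powerVec (a : ℕ) (y : R) : Fin a → R := fun t => y ^ (t : ℕ)

def codingVec (a b : ℕ) (y : R) : Fin a ⊕ Fin b → R :=
  Sum.elim (powerVec a y) fun t => y ^ (a + (t : ℕ))

theorem codingVec_dotProduct (y : R) (v : Fin a ⊕ Fin b → R) :
    codingVec a b y ⬝ᵥ v = ∑ m : Fin (a + b), y ^ (m : ℕ) * v (finSumFinEquiv.symm m) := by
  rw [← finSumFinEquiv.sum_comp]
  simp [dotProduct, codingVec, powerVec]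

theorem eq_of_forall_codingVec_dotProduct_eq [IsDomain R] {ι : Type*} [Fintype ι] {y : ι → R}
    (hy : Injective y) (hcard : a + b ≤ Fintype.card ι) {u v : Fin a ⊕ Fin b → R}
    (h : ∀ i, codingVec a b (y i) ⬝ᵥ u = codingVec a b (y i) ⬝ᵥ v) : u = v := by
  let e : Fin (a + b) ↪ ι := (Fin.castLEEmb hcard).trans (Fintype.equivFin ι).symm.toEmbedding
  have hzero : (u - v) ∘ finSumFinEquiv.symm = 0 :=
    eq_zero_of_forall_index_sum_pow_mul_eq_zero (hy.comp e.injective) fun j => by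
      have := codingVec_dotProduct (y (e j)) (u - v)
      rw [dotProduct_sub, h, sub_self] at this
      exact this.symm
  funext s
  simpa [sub_eq_zero] using congrFun hzero (finSumFinEquiv s)

def padCols (a : ℕ) (T : Matrix (Fin b) (Fin b) R) : Matrix (Fin b) (Fin a) R :=
  Matrix.of fun i j => if h : (j : ℕ) < b then T i ⟨j, h⟩ else 0

theorem padCols_mulVec (hba : b ≤ a) (T : Matrix (Fin b) (Fin b) R) (v : Fin a → R) :
    padCols a T *ᵥ v = T *ᵥ (v ∘ Fin.castLE hba) := by
  funext i
  refine (Fintype.sum_of_injective (Fin.castLE hba) (Fin.castLE_injective hba) _ _ ?_ ?_).symm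
  · intro j hj
    have : ¬ (j : ℕ) < b := fun hjb => hj ⟨⟨j, hjb⟩, rfl⟩
    simp [padCols, this]
  · intro t
    simp [padCols]

theorem vecMul_padCols (T : Matrix (Fin b) (Fin b) R) (u : Fin b → R) :
    u ᵥ* padCols a T = fun j : Fin a => if h : (j : ℕ) < b then (u ᵥ* T) ⟨j, h⟩ else 0 := by
  funext j
  by_cases hj : (j : ℕ) < b <;> simp [vecMul, dotProduct, padCols, hj]

theorem powerVec_comp_castLE (hba : b ≤ a) (y : R) :
    powerVec a y ∘ Fin.castLE hba = powerVec b y := rfl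

theorem shifted_powerVec_vecMul_of_isSymm {T : Matrix (Fin b) (Fin b) R} (hT : T.IsSymm) (y : R) :
    (fun t : Fin b => y ^ (a + (t : ℕ))) ᵥ* T = y ^ a • (T *ᵥ powerVec b y) := by
  have : (fun t : Fin b => y ^ (a + (t : ℕ))) = y ^ a • powerVec b y := by
    funext t; simp [powerVec, pow_add]
  rw [this, smul_vecMul, ← vecMul_transpose, hT.eq]

theorem codingVec_vecMul_fromRows_padCols (hba : b ≤ a)
    {W : Matrix (Fin a) (Fin a) R} (hW : W.IsSymm) {T : Matrix (Fin b) (Fin b) R} (hT : T.IsSymm)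
    (y : R) :
    codingVec a b y ᵥ* fromRows W (padCols a T) =
      W *ᵥ powerVec a y + fun j : Fin a => if h : (j : ℕ) < b then
        y ^ a * (padCols a T *ᵥ powerVec a y) ⟨j, h⟩ else 0 := by
  rw [codingVec, sumElim_vecMul_fromRows, ← vecMul_transpose, hW.eq, vecMul_padCols,
    shifted_powerVec_vecMul_of_isSymm hT, padCols_mulVec hba, powerVec_comp_castLE]
  rfl

theorem codingVec_vecMul_eq_of_mulVec_eq (hba : b ≤ a)
    {W W' : Matrix (Fin a) (Fin a) R} (hW : W.IsSymm) (hW' : W'.IsSymm)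
    {T T' : Matrix (Fin b) (Fin b) R} (hT : T.IsSymm) (hT' : T'.IsSymm) (y : R)
    (h : fromRows W (padCols a T) *ᵥ powerVec a y = fromRows W' (padCols a T') *ᵥ powerVec a y) :
    codingVec a b y ᵥ* fromRows W (padCols a T) = codingVec a b y ᵥ* fromRows W' (padCols a T') := by
  obtain ⟨hWy, hTy⟩ := Sum.elim_eq_iff.mp (by simpa only [fromRows_mulVec] using h)
  rw [codingVec_vecMul_fromRows_padCols hba hW hT, codingVec_vecMul_fromRows_padCols hba hW' hT',
    hWy, hTy]

end RegeneratingCode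

open RegeneratingCode

theorem regeneration_typeI_II_III_general {F : Type*} [Field F]
    (k d n : ℕ) (hk : 2 ≤ k) (hd : 2 * k - 2 ≤ d)
    (x : Fin n → F)
    (hx : ∀ i j : Fin n, i ≠ j → x i ^ (d - k + 1) ≠ x j ^ (d - k + 1))
    (W1 W1' : Matrix (Fin (d - k + 1)) (Fin (d - k + 1)) F)
    (hW1 : W1.IsSymm) (hW1' : W1'.IsSymm)
    (T2 T2' : Matrix (Fin (k - 1)) (Fin (k - 1)) F)
    (hT2 : T2.IsSymm) (hT2' : T2'.IsSymm)
    (W2 W2' : Matrix (Fin (k - 1)) (Fin (d - k + 1)) F)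
    (hW2 : ∀ (i : Fin (k - 1)) (j : Fin (d - k + 1)),
      W2 i j = if h : (j : ℕ) < k - 1 then T2 i ⟨j, h⟩ else 0)
    (hW2' : ∀ (i : Fin (k - 1)) (j : Fin (d - k + 1)),
      W2' i j = if h : (j : ℕ) < k - 1 then T2' i ⟨j, h⟩ else 0)
    (f : Fin n) (hidx : Fin d → Fin n) (hinj : Function.Injective hidx)
    (hdl : ∀ p : Fin d,
      ((Sum.elim (fun t : Fin (d - k + 1) => x (hidx p) ^ (t : ℕ))
          (fun t : Fin (k - 1) => x (hidx p) ^ (d - k + 1 + (t : ℕ)))) ᵥ*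
          Matrix.fromRows W1 W2) ⬝ᵥ (fun t : Fin (d - k + 1) => x f ^ (t : ℕ)) =
      ((Sum.elim (fun t : Fin (d - k + 1) => x (hidx p) ^ (t : ℕ))
          (fun t : Fin (k - 1) => x (hidx p) ^ (d - k + 1 + (t : ℕ)))) ᵥ*
          Matrix.fromRows W1' W2') ⬝ᵥ (fun t : Fin (d - k + 1) => x f ^ (t : ℕ))) :
    (Sum.elim (fun t : Fin (d - k + 1) => x f ^ (t : ℕ))
        (fun t : Fin (k - 1) => x f ^ (d - k + 1 + (t : ℕ)))) ᵥ*
      Matrix.fromRows W1 W2 =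
    (Sum.elim (fun t : Fin (d - k + 1) => x f ^ (t : ℕ))
        (fun t : Fin (k - 1) => x f ^ (d - k + 1 + (t : ℕ)))) ᵥ*
      Matrix.fromRows W1' W2' := by
  have hba : k - 1 ≤ d - k + 1 := by omega
  have hcard : d - k + 1 + (k - 1) ≤ Fintype.card (Fin d) := by rw [Fintype.card_fin]; omega
  have hhelpers : Function.Injective fun p => x (hidx p) := fun p q hpq =>
    hinj (by_contra fun hne => hx _ _ hne (congrArg (· ^ (d - k + 1)) hpq))
  obtain rfl : W2 = padCols _ T2 := Matrix.ext hW2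
  obtain rfl : W2' = padCols _ T2' := Matrix.ext hW2'
  refine codingVec_vecMul_eq_of_mulVec_eq hba hW1 hW1' hT2 hT2' (x f) ?_
  refine eq_of_forall_codingVec_dotProduct_eq hhelpers hcard fun p => ?_
  rw [dotProduct_mulVec, dotProduct_mulVec]
  exact hdl p

/-- **Regeneration for Types I, II and III.**  Let `k ≥ 2`,
`d ≥ 2k - 2`, `α = d - k + 1`, `n ≥ d + 1`, and let `x 0, …, x (n-1)` be nonzero
elements of a finite field `F` whose `α`-th powers are pairwise distinct.  Node `i`
has coding vector `ρ i = (1, x i, …, (x i)^(d-1))` (rows indexed by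
`Fin α ⊕ Fin (k-1)`) and repair vector `φ i = (1, x i, …, (x i)^(α-1))`.  Let
`M = [W1; [T2, O]]` and `M' = [W1'; [T2', O]]` with `W1, W1'` symmetric `α × α`,
`T2, T2'` symmetric `(k-1) × (k-1)` and `O` the `(k-1) × (α-k+1)` zero block.  If
`f` is a node, `hidx 0, …, hidx (d-1)` are `d` distinct helper nodes different from
`f`, and the repair downloads coincide, i.e. `ρ (hidx p) * M * (φ f)ᵗ =
ρ (hidx p) * M' * (φ f)ᵗ` for every `p`, then the shares of node `f` coincide:
`ρ f * M = ρ f * M'`. -/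
theorem regeneration_typeI_II_III {F : Type*} [Field F] [Fintype F]
    (k d n : ℕ) (hk : 2 ≤ k) (hd : 2 * k - 2 ≤ d) (hn : d + 1 ≤ n)
    (x : Fin n → F) (hx0 : ∀ i, x i ≠ 0)
    (hx : ∀ i j : Fin n, i ≠ j → x i ^ (d - k + 1) ≠ x j ^ (d - k + 1))
    (W1 W1' : Matrix (Fin (d - k + 1)) (Fin (d - k + 1)) F)
    (hW1 : W1.IsSymm) (hW1' : W1'.IsSymm)
    (T2 T2' : Matrix (Fin (k - 1)) (Fin (k - 1)) F)
    (hT2 : T2.IsSymm) (hT2' : T2'.IsSymm)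
    (W2 W2' : Matrix (Fin (k - 1)) (Fin (d - k + 1)) F)
    (hW2 : ∀ (i : Fin (k - 1)) (j : Fin (d - k + 1)),
      W2 i j = if h : (j : ℕ) < k - 1 then T2 i ⟨j, h⟩ else 0)
    (hW2' : ∀ (i : Fin (k - 1)) (j : Fin (d - k + 1)),
      W2' i j = if h : (j : ℕ) < k - 1 then T2' i ⟨j, h⟩ else 0)
    (f : Fin n) (hidx : Fin d → Fin n) (hinj : Function.Injective hidx)
    (hne : ∀ p : Fin d, hidx p ≠ f)
    (hdl : ∀ p : Fin d,
      ((Sum.elim (fun t : Fin (d - k + 1) => x (hidx p) ^ (t : ℕ))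
          (fun t : Fin (k - 1) => x (hidx p) ^ (d - k + 1 + (t : ℕ)))) ᵥ*
          Matrix.fromRows W1 W2) ⬝ᵥ (fun t : Fin (d - k + 1) => x f ^ (t : ℕ)) =
      ((Sum.elim (fun t : Fin (d - k + 1) => x (hidx p) ^ (t : ℕ))
          (fun t : Fin (k - 1) => x (hidx p) ^ (d - k + 1 + (t : ℕ)))) ᵥ*
          Matrix.fromRows W1' W2') ⬝ᵥ (fun t : Fin (d - k + 1) => x f ^ (t : ℕ))) :
    (Sum.elim (fun t : Fin (d - k + 1) => x f ^ (t : ℕ))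
        (fun t : Fin (k - 1) => x f ^ (d - k + 1 + (t : ℕ)))) ᵥ*
      Matrix.fromRows W1 W2 =
    (Sum.elim (fun t : Fin (d - k + 1) => x f ^ (t : ℕ))
        (fun t : Fin (k - 1) => x f ^ (d - k + 1 + (t : ℕ)))) ᵥ*
      Matrix.fromRows W1' W2' :=
  regeneration_typeI_II_III_general k d n hk hd x hx W1 W1' hW1 hW1' T2 T2' hT2 hT2' W2 W2' hW2 hW2'
    f hidx hinj hdl
end

section
/- (Regeneration for Type V via MBR exact-regeneration.) Let d ≥ 2, k = 1, α = d, and n ≥ d+1. Let x_1, ..., x_n be nonzero elements of a finite field F_q with x_i^d ≠ x_j^d for i ≠ j (hence pairwise distinct), and let ρ_i = (1, x_i, ..., x_i^{d-1}). Let M and M' be symmetric d×d matrices over F_q. Let f ∈ {1, ..., n} and let h_1, ..., h_d be d distinct indices in {1, ..., n}\{f}. If ρ_{h_p} M ρ_f^t = ρ_{h_p} M' ρ_f^t for every p = 1, ..., d, then ρ_f M = ρ_f M'. Equivalently, a failed node connecting to any d helper nodes can regenerate its share from the d downloaded symbols d_{f,h_p} = c_{h_p} ρ_f^t. -/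
open Matrix

/-- **Regeneration for Type V via MBR exact-regeneration.**  Let
`d ≥ 2`, `k = 1`, `α = d`, `n ≥ d + 1`, and let `x 0, …, x (n-1)` be nonzero
elements of a finite field `F` with `(x i)^d ≠ (x j)^d` for `i ≠ j`; node `i` has
coding vector `ρ i = (1, x i, …, (x i)^(d-1))`.  Let `M` and `M'` be symmetric
`d × d` matrices over `F`.  If `f` is a node, `hidx 0, …, hidx (d-1)` are `d`
distinct helper nodes different from `f`, and
`ρ (hidx p) * M * (ρ f)ᵗ = ρ (hidx p) * M' * (ρ f)ᵗ` for every `p`, then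
`ρ f * M = ρ f * M'`:  a failed node can regenerate its share from the `d`
downloaded symbols. -/
theorem regeneration_typeV {F : Type*} [Field F] [Fintype F]
    (d n : ℕ) (hd : 2 ≤ d) (hn : d + 1 ≤ n)
    (x : Fin n → F) (hx0 : ∀ i, x i ≠ 0)
    (hx : ∀ i j : Fin n, i ≠ j → x i ^ d ≠ x j ^ d)
    (M M' : Matrix (Fin d) (Fin d) F) (hM : M.IsSymm) (hM' : M'.IsSymm)
    (f : Fin n) (hidx : Fin d → Fin n) (hinj : Function.Injective hidx)
    (hne : ∀ p : Fin d, hidx p ≠ f)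
    (hdl : ∀ p : Fin d,
      ((fun t : Fin d => x (hidx p) ^ (t : ℕ)) ᵥ* M) ⬝ᵥ
          (fun t : Fin d => x f ^ (t : ℕ)) =
      ((fun t : Fin d => x (hidx p) ^ (t : ℕ)) ᵥ* M') ⬝ᵥ
          (fun t : Fin d => x f ^ (t : ℕ))) :
    (fun t : Fin d => x f ^ (t : ℕ)) ᵥ* M =
    (fun t : Fin d => x f ^ (t : ℕ)) ᵥ* M' := by
  set v : Fin d → F := fun t : Fin d => x f ^ (t : ℕ) with hv
  set N : Matrix (Fin d) (Fin d) F := M - M' with hN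
  have hNsymm : Nᵀ = N := by
    simp [hN, Matrix.transpose_sub, hM.eq, hM'.eq]
  -- the Vandermonde matrix of helpers
  have hxinj : Function.Injective (fun p : Fin d => x (hidx p)) := by
    intro p q hpq
    by_contra hpq'
    exact hx _ _ (fun h => hpq' (hinj h)) (by simp only at hpq; rw [hpq])
  have hdet : (Matrix.vandermonde (fun p : Fin d => x (hidx p))).det ≠ 0 :=
    Matrix.det_vandermonde_ne_zero_iff.mpr hxinj
  have hmul : Matrix.vandermonde (fun p : Fin d => x (hidx p)) *ᵥ (N *ᵥ v) = 0 := by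
    funext p
    have h := hdl p
    have h' : (fun t : Fin d => x (hidx p) ^ (t : ℕ)) ⬝ᵥ (N *ᵥ v) = 0 := by
      rw [hN, Matrix.sub_mulVec, dotProduct_sub,
        Matrix.dotProduct_mulVec, Matrix.dotProduct_mulVec, h, sub_self]
    simpa [Matrix.mulVec, Matrix.vandermonde, dotProduct] using h'
  have hzero : N *ᵥ v = 0 := by
    have := Matrix.eq_zero_of_mulVec_eq_zero hdet hmul
    exact this
  have hvN : v ᵥ* N = 0 := by
    rw [← hNsymm, Matrix.vecMul_transpose, hzero]
  have : v ᵥ* M - v ᵥ* M' = 0 := by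
    rw [← Matrix.vecMul_sub, ← hN, hvN]
  exact sub_eq_zero.mp this
end
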